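/- arXiv:1408.3933 — 4 statements merged into one kernel-verified Lean document; each statement's English description precedes it below -/
import Mathlib

section
/- Let V be a real vector space and let Ω be an open subset of the projective sphere S(V) (the quotient of V∖{0} by positive scalings) with Ω ≠ S(V). Then Ω is convex (i.e. its preimage in V is a convex cone) if and only if there exists an affine chart A of S(V) (a connected component of the complement of a projective hyperplane) such that Ω ⊆ A and Ω is convex in the usual affine sense in A. -/
/-! If the preimage of a convex `Ω` contained a pair `x, -x`, then, being open, it would make
`0` (their midpoint) an interior point of the convex cone, so the cone would meet every half-line
and `Ω = S(V)`. Hence the preimage is closed under addition: an open convex cone avoiding `0`, and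
Hahn–Banach gives a linear form `f` positive on it; the chart is `{f > 0}`, modelled on
`{f = 1}`. Conversely, rescaling `x` and `y` into `{f = 1}` writes `x + y` as a positive multiple
of a point of the convex slice. -/

open Set

open Filter Topology

namespace SphereConvexity

variable {V : Type*} [NormedAddCommGroup V] [NormedSpace ℝ V]

/-- The preimage in `V ∖ {0}` of a subset `Ω` of the projective sphere
`S(V) = (V ∖ {0}) / ℝ₊` of half-lines of `V`. -/
def pre (Ω : Set (Module.Ray ℝ V)) : Set V :=
  {x : V | ∃ h : x ≠ 0, rayOfNeZero ℝ x h ∈ Ω}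

theorem _root_.ConvexCone.convex_insert_zero {R M : Type*} [Semiring R] [PartialOrder R]
    [AddCommMonoid M] [Module R M] (C : ConvexCone R M) : Convex R (insert 0 (C : Set M)) :=
  ConvexCone.convex
    { carrier := insert 0 (C : Set M)
      smul_mem' := by
        rintro c hc x (rfl | hx)
        · exact Or.inl (smul_zero c)
        · exact Or.inr (C.smul_mem hc hx)
      add_mem' := by
        rintro x (rfl | hx) y (rfl | hy)
        · exact Or.inl (add_zero 0)
        · simpa using Or.inr hy
        · simpa using Or.inr hx
        · exact Or.inr (C.add_mem hx hy) }

theorem _root_.exists_linearMap_pos_of_isOpen_convex {E : Type*} [TopologicalSpace E]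
    [AddCommGroup E] [Module ℝ E] [IsTopologicalAddGroup E] [ContinuousSMul ℝ E] [Nontrivial E]
    {s : Set E} (hs : Convex ℝ s) (hso : IsOpen s) (hs0 : (0 : E) ∉ s) :
    ∃ f : E →ₗ[ℝ] ℝ, f ≠ 0 ∧ ∀ x ∈ s, 0 < f x := by
  obtain ⟨x, hx⟩ | hempty := s.eq_empty_or_nonempty.symm
  · obtain ⟨g, hg⟩ := geometric_hahn_banach_point_open hs hso hs0
    have hpos : ∀ y ∈ s, 0 < g y := fun y hy => by simpa using hg y hy
    exact ⟨g, fun h => (hpos x hx).ne' (LinearMap.congr_fun h x), hpos⟩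
  · obtain ⟨v, hv⟩ := exists_ne (0 : E)
    obtain ⟨f, hf⟩ : ∃ f : Module.Dual ℝ E, f v ≠ 0 := by
      simpa using (Module.forall_dual_apply_eq_zero_iff ℝ v).not.2 hv
    exact ⟨f, fun h => hf (by simp [h]), by simp [hempty]⟩

theorem _root_.Convex.mem_nhds_zero_of_mem_interior_of_neg_mem_interior {E : Type*}
    [TopologicalSpace E] [AddCommGroup E] [Module ℝ E] [IsTopologicalAddGroup E]
    [ContinuousSMul ℝ E] {t : Set E} (ht : Convex ℝ t) {x : E} (hx : x ∈ interior t)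
    (hnx : -x ∈ interior t) : t ∈ 𝓝 0 := by
  have hmid := ht.interior hx hnx (by norm_num : (0 : ℝ) ≤ 1 / 2)
    (by norm_num : (0 : ℝ) ≤ 1 / 2) (by norm_num)
  rw [smul_neg, add_neg_cancel] at hmid
  exact mem_interior_iff_mem_nhds.1 hmid

variable {Ω : Set (Module.Ray ℝ V)}

theorem zero_notMem_pre : (0 : V) ∉ pre Ω := fun ⟨h, _⟩ => h rfl

theorem smul_mem_pre {c : ℝ} (hc : 0 < c) {x : V} (hx : x ∈ pre Ω) : c • x ∈ pre Ω := by
  obtain ⟨hx0, hxΩ⟩ := hx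
  refine ⟨smul_ne_zero hc.ne' hx0, ?_⟩
  rwa [(ray_eq_iff _ _).2 (SameRay.sameRay_pos_smul_right x hc).symm]

theorem nontrivial_of_ne_univ (hne : Ω ≠ univ) : Nontrivial V := by
  obtain ⟨r, -⟩ := ne_univ_iff_exists_notMem _ |>.1 hne
  induction r using Module.Ray.ind with
  | _ v hv => exact ⟨v, 0, hv⟩

def preCone (Ω : Set (Module.Ray ℝ V))
    (hadd : ∀ x ∈ pre Ω, ∀ y ∈ pre Ω, x + y ∈ pre Ω) : ConvexCone ℝ V where
  carrier := pre Ω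
  smul_mem' _ hc _ hx := smul_mem_pre hc hx
  add_mem' x hx y hy := hadd x hx y hy

theorem eq_univ_of_insert_zero_pre_mem_nhds (h : insert 0 (pre Ω) ∈ 𝓝 (0 : V)) : Ω = univ := by
  refine eq_univ_of_forall fun r => ?_
  induction r using Module.Ray.ind with
  | _ w hw =>
    have hcont : Continuous fun c : ℝ => c • w := continuous_id.smul continuous_const
    have hsmul : Tendsto (fun c : ℝ => c • w) (𝓝[>] 0) (𝓝 0) :=
      (hcont.tendsto' 0 0 (zero_smul ℝ w)).mono_left nhdsWithin_le_nhds
    obtain ⟨c, hcw, hc⟩ := ((hsmul.eventually h).and self_mem_nhdsWithin).exists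
    rcases hcw with hcw | hcw
    · exact absurd hcw (smul_ne_zero (ne_of_gt hc) hw)
    · have hw' := smul_mem_pre (inv_pos.2 hc) hcw
      rw [inv_smul_smul₀ hc.ne'] at hw'
      exact hw'.2

theorem add_mem_pre_of_convex_insert_zero (hopen : IsOpen (pre Ω)) (hne : Ω ≠ univ)
    (hconv : Convex ℝ (insert 0 (pre Ω))) {x y : V} (hx : x ∈ pre Ω) (hy : y ∈ pre Ω) :
    x + y ∈ pre Ω := by
  have hmid : (2 : ℝ) • ((1 / 2 : ℝ) • x + (1 / 2 : ℝ) • y) = x + y := by module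
  rcases hconv (mem_insert_of_mem _ hx) (mem_insert_of_mem _ hy)
    (by norm_num : (0 : ℝ) ≤ 1 / 2) (by norm_num : (0 : ℝ) ≤ 1 / 2) (by norm_num) with h0 | hz
  · rw [h0, smul_zero, eq_comm, add_eq_zero_iff_eq_neg'] at hmid
    subst hmid
    have hint : pre Ω ⊆ interior (insert 0 (pre Ω)) :=
      hopen.subset_interior_iff.2 (subset_insert _ _)
    exact absurd (eq_univ_of_insert_zero_pre_mem_nhds
      (hconv.mem_nhds_zero_of_mem_interior_of_neg_mem_interior (hint hx) (hint hy))) hne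
  · exact hmid ▸ smul_mem_pre two_pos hz

theorem add_mem_pre_of_convex_slice {f : V →ₗ[ℝ] ℝ} (hf : ∀ x ∈ pre Ω, 0 < f x)
    (hslice : Convex ℝ {x : V | f x = 1 ∧ x ∈ pre Ω}) {x y : V} (hx : x ∈ pre Ω)
    (hy : y ∈ pre Ω) : x + y ∈ pre Ω := by
  have hp := hf x hx
  have hq := hf y hy
  have hnormalize : ∀ z ∈ pre Ω, (f z)⁻¹ • z ∈ {x : V | f x = 1 ∧ x ∈ pre Ω} := fun z hz =>
    ⟨by simp [(hf z hz).ne'], smul_mem_pre (inv_pos.2 (hf z hz)) hz⟩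
  have hcomb := hslice (hnormalize x hx) (hnormalize y hy)
    (div_nonneg hp.le (add_pos hp hq).le) (div_nonneg hq.le (add_pos hp hq).le)
    (by field_simp)
  have hxy : (f x + f y) • ((f x / (f x + f y)) • (f x)⁻¹ • x
      + (f y / (f x + f y)) • (f y)⁻¹ • y) = x + y := by
    match_scalars <;> field_simp
  exact hxy ▸ smul_mem_pre (add_pos hp hq) hcomb.2

/-- **Convexity in the projective sphere.**  Let `Ω` be an open subset of the
projective sphere `S(V)` with `Ω ≠ S(V)`.  Then `Ω` is convex (its preimage in `V`,
together with `0`, is a convex cone) if and only if there is an affine chart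
(the side `{f > 0}` of the projective hyperplane given by a nonzero linear form `f`)
containing `Ω` in which `Ω` is convex in the usual affine sense (identifying the chart
with the affine hyperplane `{f = 1}`). -/
theorem convex_iff_exists_affine_chart (Ω : Set (Module.Ray ℝ V))
    (hopen : IsOpen (pre Ω)) (hne : Ω ≠ Set.univ) :
    (Convex ℝ (insert (0 : V) (pre Ω)) ∧
      ∀ c : ℝ, 0 < c → ∀ x ∈ insert (0 : V) (pre Ω), c • x ∈ insert (0 : V) (pre Ω)) ↔
    ∃ f : V →ₗ[ℝ] ℝ, f ≠ 0 ∧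
      (∀ x ∈ pre Ω, 0 < f x) ∧
      Convex ℝ {x : V | f x = 1 ∧ x ∈ pre Ω} := by
  constructor
  · rintro ⟨hconv, -⟩
    have hpre : Convex ℝ (pre Ω) :=
      (preCone Ω fun _ hx _ hy => add_mem_pre_of_convex_insert_zero hopen hne hconv hx hy).convex
    have := nontrivial_of_ne_univ hne
    obtain ⟨f, hf0, hf⟩ := exists_linearMap_pos_of_isOpen_convex hpre hopen zero_notMem_pre
    exact ⟨f, hf0, hf, ((convex_singleton 1).linear_preimage f).inter hpre⟩
  · rintro ⟨f, -, hf, hslice⟩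
    let C := preCone Ω fun _ hx _ hy => add_mem_pre_of_convex_slice hf hslice hx hy
    refine ⟨C.convex_insert_zero, ?_⟩
    rintro c hc x (rfl | hx)
    · exact Or.inl (smul_zero c)
    · exact Or.inr (smul_mem_pre hc hx)

end SphereConvexity
end

section
/- Let Ω₁ ⊆ Ω₂ be two properly convex open subsets of real projective space (or the projective sphere). Then for every Borel set A ⊆ Ω₁, the Hilbert (Busemann) volume measures satisfy μ_{Ω₂}(A) ≤ μ_{Ω₁}(A). -/
open Set MeasureTheory

namespace Hilbert

variable {d : ℕ}

/-- For `x, y` in a bounded convex open set `Ω`, the parameter `t ≥ 1` at which the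
half-line from `x` through `y` leaves `Ω` (so `x + t • (y - x) ∈ ∂Ω`). -/
noncomputable def reach (Ω : Set (EuclideanSpace ℝ (Fin d))) (x y : EuclideanSpace ℝ (Fin d)) : ℝ :=
  sSup {t : ℝ | x + t • (y - x) ∈ Ω}

/-- The Hilbert distance on a properly convex open set `Ω`:
`d_Ω(x,y) = ½ log [p : x : y : q]` where `p, q` are the intersection points of the
line `(xy)` with `∂Ω` (`x` between `p` and `y`).  In the affine parametrisation of
the line with `x` at `0` and `y` at `1`, the cross-ratio equals
`(t₊ (1 - t₋)) / ((t₊ - 1)(-t₋))` where `t₊ = reach Ω x y` and `1 - t₋ = reach Ω y x`. -/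
noncomputable def hilbertDist (Ω : Set (EuclideanSpace ℝ (Fin d)))
    (x y : EuclideanSpace ℝ (Fin d)) : ℝ :=
  letI := Classical.propDecidable (x = y)
  if x = y then 0 else
    (1 / 2) * Real.log ((reach Ω x y * reach Ω y x) /
      ((reach Ω x y - 1) * (reach Ω y x - 1)))

/-- The Hilbert–Finsler norm `F_Ω(x,v) = (|v|/2) (1/|xp⁻| + 1/|xp⁺|)` of the tangent
vector `v` at `x ∈ Ω`, where `p^±` are the intersections of the line `x + ℝ v`
with `∂Ω`. -/
noncomputable def finsler (Ω : Set (EuclideanSpace ℝ (Fin d)))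
    (x v : EuclideanSpace ℝ (Fin d)) : ℝ :=
  (1 / 2) * ((sSup {t : ℝ | 0 < t ∧ x + t • v ∈ Ω})⁻¹ +
    (sSup {t : ℝ | 0 < t ∧ x - t • v ∈ Ω})⁻¹)

/-- The Busemann volume `μ_Ω` of the Hilbert geometry of `Ω`: the measure with density
(w.r.t. Lebesgue measure) the ratio of the Lebesgue volume of the Euclidean unit ball
to the Lebesgue volume of the unit ball of the Finsler norm `F_Ω(x, ·)`. -/
noncomputable def busemann (Ω : Set (EuclideanSpace ℝ (Fin d))) :
    Measure (EuclideanSpace ℝ (Fin d)) :=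
  volume.withDensity fun x =>
    volume (Metric.ball (0 : EuclideanSpace ℝ (Fin d)) 1) /
      volume {v : EuclideanSpace ℝ (Fin d) | finsler Ω x v < 1}

lemma sSup_inv_mono {Ω₁ Ω₂ : Set (EuclideanSpace ℝ (Fin d))}
    (h₁o : IsOpen Ω₁) (h₂b : Bornology.IsBounded Ω₂) (hsub : Ω₁ ⊆ Ω₂)
    {x v : EuclideanSpace ℝ (Fin d)} (hx : x ∈ Ω₁) (hv : v ≠ 0) :
    (sSup {t : ℝ | 0 < t ∧ x + t • v ∈ Ω₂})⁻¹ ≤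
      (sSup {t : ℝ | 0 < t ∧ x + t • v ∈ Ω₁})⁻¹ := by
  obtain ⟨ε, hε, hball⟩ := Metric.isOpen_iff.mp h₁o x hx
  obtain ⟨R, hR⟩ := h₂b.subset_ball 0
  have hvn : 0 < ‖v‖ := norm_pos_iff.mpr hv
  set t₀ := ε / (2 * ‖v‖) with ht₀def
  have ht₀ : 0 < t₀ := div_pos hε (by positivity)
  have hmem : t₀ ∈ {t : ℝ | 0 < t ∧ x + t • v ∈ Ω₁} := by
    refine ⟨ht₀, hball ?_⟩
    rw [Metric.mem_ball, dist_eq_norm]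
    simp only [add_sub_cancel_left, norm_smul, Real.norm_eq_abs, abs_of_pos ht₀]
    have heq : t₀ * ‖v‖ = ε / 2 := by
      rw [ht₀def]; field_simp
    rw [heq]; linarith
  have hsubset : {t : ℝ | 0 < t ∧ x + t • v ∈ Ω₁} ⊆ {t : ℝ | 0 < t ∧ x + t • v ∈ Ω₂} :=
    fun t ht => ⟨ht.1, hsub ht.2⟩
  have hbdd : BddAbove {t : ℝ | 0 < t ∧ x + t • v ∈ Ω₂} := by
    refine ⟨(R + ‖x‖) / ‖v‖, fun t ht => ?_⟩
    have h1 : ‖x + t • v‖ < R := by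
      have := hR ht.2
      simpa [Metric.mem_ball, dist_eq_norm] using this
    have h2 : t * ‖v‖ ≤ ‖x + t • v‖ + ‖x‖ := by
      have h3 : ‖t • v‖ = ‖(x + t • v) - x‖ := by congr 1; abel
      rw [norm_smul, Real.norm_eq_abs, abs_of_pos ht.1] at h3
      calc t * ‖v‖ = ‖(x + t • v) - x‖ := h3
        _ ≤ ‖x + t • v‖ + ‖x‖ := norm_sub_le _ _
    rw [le_div_iff₀ hvn]
    linarith
  have hpos : 0 < sSup {t : ℝ | 0 < t ∧ x + t • v ∈ Ω₁} :=
    lt_of_lt_of_le ht₀ (le_csSup (hbdd.mono hsubset) hmem)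
  exact inv_anti₀ hpos (csSup_le_csSup hbdd ⟨t₀, hmem⟩ hsubset)

lemma finsler_mono {Ω₁ Ω₂ : Set (EuclideanSpace ℝ (Fin d))}
    (h₁o : IsOpen Ω₁) (h₂b : Bornology.IsBounded Ω₂) (hsub : Ω₁ ⊆ Ω₂)
    {x : EuclideanSpace ℝ (Fin d)} (hx : x ∈ Ω₁) (v : EuclideanSpace ℝ (Fin d)) :
    finsler Ω₂ x v ≤ finsler Ω₁ x v := by
  rcases eq_or_ne v 0 with rfl | hv
  · unfold finsler
    simp [hx, hsub hx]
  · unfold finsler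
    have h1 := sSup_inv_mono h₁o h₂b hsub hx hv
    have h2 := sSup_inv_mono h₁o h₂b hsub hx (neg_ne_zero.mpr hv)
    simp only [smul_neg, ← sub_eq_add_neg] at h2
    have h2' : (sSup {t : ℝ | 0 < t ∧ x - t • v ∈ Ω₂})⁻¹ ≤
        (sSup {t : ℝ | 0 < t ∧ x - t • v ∈ Ω₁})⁻¹ := h2
    nlinarith [h1, h2']

/-- **Monotonicity of the Busemann volume.**  Let `Ω₁ ⊆ Ω₂` be properly convex open
subsets of (an affine chart of) real projective space.  Then for every Borel set
`A ⊆ Ω₁`, the Hilbert (Busemann) volume measures satisfy `μ_{Ω₂}(A) ≤ μ_{Ω₁}(A)`. -/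
theorem busemann_mono (d : ℕ) (Ω₁ Ω₂ : Set (EuclideanSpace ℝ (Fin d)))
    (h₁o : IsOpen Ω₁) (h₁c : Convex ℝ Ω₁) (h₁b : Bornology.IsBounded Ω₁)
    (h₁n : Ω₁.Nonempty)
    (h₂o : IsOpen Ω₂) (h₂c : Convex ℝ Ω₂) (h₂b : Bornology.IsBounded Ω₂)
    (hsub : Ω₁ ⊆ Ω₂)
    (A : Set (EuclideanSpace ℝ (Fin d))) (hA : MeasurableSet A) (hAsub : A ⊆ Ω₁) :
    busemann Ω₂ A ≤ busemann Ω₁ A := by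
  rw [busemann, busemann, withDensity_apply _ hA, withDensity_apply _ hA]
  refine lintegral_mono_ae ((ae_restrict_iff' hA).mpr (ae_of_all _ fun x hx => ?_))
  have hsubset : {v : EuclideanSpace ℝ (Fin d) | finsler Ω₁ x v < 1} ⊆
      {v : EuclideanSpace ℝ (Fin d) | finsler Ω₂ x v < 1} :=
    fun v hv => lt_of_le_of_lt (finsler_mono h₁o h₂b hsub (hAsub hx) v) hv
  exact ENNReal.div_le_div_left (measure_mono hsubset) _

end Hilbert
end

section
/- Let Γ be an infinite discrete subgroup of SL^±(d+1,ℝ) acting properly (discontinuously) on a convex open subset Ω of the projective sphere S^d. If Γ is irreducible as a linear group on ℝ^{d+1}, then Ω is properly convex (its closure does not contain any pair of antipodal points, equivalently its closure lies in an affine chart). -/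
open Set

namespace ProperConvexity

/-- **Irreducible proper actions give properly convex sets.**
Let `Γ` be an infinite discrete subgroup of `SL^±(d+1,ℝ)` acting properly
discontinuously on a convex open subset `Ω` of the projective sphere `S^d`
(described by the open convex cone `C` of half-lines over `Ω`).  If `Γ` is
irreducible as a linear group on `ℝ^{d+1}`, then `Ω` is properly convex: its closure
contains no pair of antipodal points. -/
theorem properly_convex_of_irreducible (d : ℕ)
    (Γ : Subgroup (GL (Fin (d + 1)) ℝ)) [DiscreteTopology ↥Γ] [Infinite ↥Γ]
    (hdet : ∀ γ ∈ Γ, ((γ : GL (Fin (d + 1)) ℝ) : Matrix (Fin (d + 1)) (Fin (d + 1)) ℝ).det = 1 ∨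
      ((γ : GL (Fin (d + 1)) ℝ) : Matrix (Fin (d + 1)) (Fin (d + 1)) ℝ).det = -1)
    (C : Set (Fin (d + 1) → ℝ))
    (hopen : IsOpen C) (hconv : Convex ℝ C) (hne : C.Nonempty) (h0 : (0 : Fin (d + 1) → ℝ) ∉ C)
    (hcone : ∀ c : ℝ, 0 < c → ∀ x ∈ C, c • x ∈ C)
    (hinv : ∀ γ ∈ Γ,
      (((γ : GL (Fin (d + 1)) ℝ) : Matrix (Fin (d + 1)) (Fin (d + 1)) ℝ).mulVec) '' C = C)
    (hproper : ∀ K : Set (Fin (d + 1) → ℝ), IsCompact K → K ⊆ C →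
      {γ : ↥Γ | ∃ x ∈ K, ∃ c : ℝ, 0 < c ∧
        c • (((γ : GL (Fin (d + 1)) ℝ) : Matrix (Fin (d + 1)) (Fin (d + 1)) ℝ).mulVec x) ∈ K}.Finite)
    (hirr : ∀ W : Submodule ℝ (Fin (d + 1) → ℝ),
      (∀ γ ∈ Γ, ∀ x ∈ W,
        ((γ : GL (Fin (d + 1)) ℝ) : Matrix (Fin (d + 1)) (Fin (d + 1)) ℝ).mulVec x ∈ W) →
      W = ⊥ ∨ W = ⊤) :
    ∀ x : Fin (d + 1) → ℝ, x ∈ closure C → -x ∈ closure C → x = 0 := by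
  -- closure C is stable under positive scaling
  have hscale : ∀ c : ℝ, 0 < c → ∀ v ∈ closure C, c • v ∈ closure C := by
    intro c hc v hv
    exact map_mem_closure (continuous_const_smul c) hv (fun y hy => hcone c hc y hy)
  -- 0 ∈ closure C
  have h0cl : (0 : Fin (d + 1) → ℝ) ∈ closure C := by
    obtain ⟨a, ha⟩ := hne
    have htend : Filter.Tendsto (fun n : ℕ => ((n : ℝ) + 1)⁻¹ • a)
        Filter.atTop (nhds (0 : Fin (d + 1) → ℝ)) := by
      have h1 : Filter.Tendsto (fun n : ℕ => 1 / ((n : ℝ) + 1)) Filter.atTop (nhds 0) :=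
        tendsto_one_div_add_atTop_nhds_zero_nat
      simpa [one_div] using h1.smul_const a
    refine mem_closure_of_tendsto htend ?_
    filter_upwards with n
    exact hcone _ (by positivity) a ha
  -- the symmetric part of the closure is a submodule
  set W : Submodule ℝ (Fin (d + 1) → ℝ) :=
    { carrier := {v | v ∈ closure C ∧ -v ∈ closure C}
      zero_mem' := by simpa using h0cl
      add_mem' := by
        intro x y hx hy
        have hcc : Convex ℝ (closure C) := hconv.closure
        have hmid : ∀ u v : Fin (d + 1) → ℝ, u ∈ closure C → v ∈ closure C →
            u + v ∈ closure C := by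
          intro u v hu hv
          have hm : (1/2 : ℝ) • u + (1/2 : ℝ) • v ∈ closure C :=
            hcc hu hv (by norm_num) (by norm_num) (by norm_num)
          have h2 : (2 : ℝ) • ((1/2 : ℝ) • u + (1/2 : ℝ) • v) = u + v := by
            rw [smul_add, smul_smul, smul_smul]; norm_num
          have := hscale 2 (by norm_num) _ hm
          rwa [h2] at this
        refine ⟨hmid x y hx.1 hy.1, ?_⟩
        have := hmid (-x) (-y) hx.2 hy.2
        simpa [neg_add, add_comm] using this
      smul_mem' := by
        intro c x hx
        rcases lt_trichotomy c 0 with hc | hc | hc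
        · have h1 : c • x = (-c) • (-x) := by simp
          have h2 : -(c • x) = (-c) • x := by simp
          refine ⟨?_, ?_⟩
          · rw [h1]; exact hscale (-c) (by linarith) _ hx.2
          · rw [h2]; exact hscale (-c) (by linarith) _ hx.1
        · subst hc; simpa using h0cl
        · exact ⟨hscale c hc _ hx.1, by
            rw [← smul_neg]; exact hscale c hc _ hx.2⟩ } with hW
  -- W is Γ-invariant
  have hWinv : ∀ γ ∈ Γ, ∀ x ∈ W,
      ((γ : GL (Fin (d + 1)) ℝ) : Matrix (Fin (d + 1)) (Fin (d + 1)) ℝ).mulVec x ∈ W := by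
    intro γ hγ x hx
    set M := ((γ : GL (Fin (d + 1)) ℝ) : Matrix (Fin (d + 1)) (Fin (d + 1)) ℝ) with hM
    have hcont : Continuous M.mulVec := by
      have := (Matrix.mulVecLin M).continuous_of_finiteDimensional
      simpa [funext (Matrix.mulVecLin_apply M)] using this
    have hmaps : Set.MapsTo M.mulVec C C := by
      intro y hy
      rw [← hinv γ hγ]
      exact Set.mem_image_of_mem _ hy
    have hxW : x ∈ closure C ∧ -x ∈ closure C := hx
    refine ⟨map_mem_closure hcont hxW.1 hmaps, ?_⟩
    have : M.mulVec (-x) ∈ closure C := map_mem_closure hcont hxW.2 hmaps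
    simpa [Matrix.mulVec_neg] using this
  rcases hirr W hWinv with hbot | htop
  · intro x hx hnx
    have : x ∈ W := ⟨hx, hnx⟩
    rw [hbot] at this
    simpa using this
  · exfalso
    obtain ⟨a, ha⟩ := hne
    have hna : -a ∈ closure C := by
      have : (-a : Fin (d + 1) → ℝ) ∈ W := htop ▸ Submodule.mem_top
      exact this.1
    have hai : a ∈ interior C := by rwa [hopen.interior_eq]
    have h0i : (0 : Fin (d + 1) → ℝ) ∈ interior C := by
      have := hconv.combo_interior_closure_mem_interior hai hna
        (by norm_num : (0:ℝ) < 1/2) (by norm_num : (0:ℝ) ≤ 1/2) (by norm_num)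
      simpa using this
    exact h0 (interior_subset h0i)


end ProperConvexity
end

section
/- Let P be a Coxeter polytope of S^d with facet set S, facet linear forms (α_s) and polar vectors (v_s), whose Cartan matrix A_P = (α_s(v_t)) is of negative type (each irreducible component has negative Perron eigenvalue of minimal modulus). Then there exists an affine chart of S^d containing P and all the polars [v_s], s∈S. -/
open Set Submodule
noncomputable section

namespace Vinberg

variable {V : Type*} [NormedAddCommGroup V] [NormedSpace ℝ V]

/-- A Coxeter polytope on the projective sphere `S(V)`, described by the cone
`{x | ∀ s, α s x ≤ 0}`: the data of the facet linear forms `α s` and the polar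
vectors `v s` of the reflections `σ_s = Id − α_s ⊗ v_s`, subject to the
Vinberg conditions. -/
structure CoxPoly (V : Type*) [NormedAddCommGroup V] [NormedSpace ℝ V]
    (S : Type*) [Fintype S] where
  α : S → (V →ₗ[ℝ] ℝ)
  v : S → V
  pair : ∀ s, α s (v s) = 2
  offdiag : ∀ s t, s ≠ t → α s (v t) ≤ 0
  zsym : ∀ s t, α s (v t) = 0 → α t (v s) = 0
  angle : ∀ s t, s ≠ t →
    (∃ m : ℕ, 2 ≤ m ∧ α s (v t) * α t (v s) = 4 * Real.cos (Real.pi / m) ^ 2) ∨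
      4 ≤ α s (v t) * α t (v s)
  sharp : ∀ x : V, (∀ s, α s x ≤ 0) → (∀ s, α s (-x) ≤ 0) → x = 0
  int_nonempty : (interior {x : V | ∀ s, α s x ≤ 0}).Nonempty

variable {S : Type*} [Fintype S]

/-- The convex cone over the polytope `P`. -/
def CoxPoly.cone (P : CoxPoly V S) : Set V := {x | ∀ s, P.α s x ≤ 0}

/-- The reflection across the facet `s`. -/
def CoxPoly.refl (P : CoxPoly V S) (s : S) : Module.End ℝ V :=
  LinearMap.id - (P.α s).smulRight (P.v s)

lemma CoxPoly.refl_mul_self (P : CoxPoly V S) (s : S) : P.refl s * P.refl s = 1 := by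
  ext x
  have h := P.pair s
  simp only [CoxPoly.refl, Module.End.mul_apply, LinearMap.sub_apply, LinearMap.id_apply,
    LinearMap.smulRight_apply, map_sub, map_smul, Module.End.one_apply, smul_eq_mul, h]
  module

/-- The reflection across the facet `s`, as an invertible endomorphism. -/
def CoxPoly.reflU (P : CoxPoly V S) (s : S) : (Module.End ℝ V)ˣ :=
  ⟨P.refl s, P.refl s, P.refl_mul_self s, P.refl_mul_self s⟩

/-- The linear Coxeter group `Γ_P` generated by the facet reflections. -/
def CoxPoly.group (P : CoxPoly V S) : Subgroup (Module.End ℝ V)ˣ :=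
  Subgroup.closure (Set.range P.reflU)

/-- The cone over the Tits–Vinberg convex set `C_P = ⋃_{γ ∈ Γ_P} γ(P)`. -/
def CoxPoly.orbit (P : CoxPoly V S) : Set V :=
  ⋃ γ ∈ P.group, ((γ : (Module.End ℝ V)ˣ) : Module.End ℝ V) '' P.cone

/-- The cone over the convex open set `Ω_P`, the interior of `C_P`. -/
def CoxPoly.domain (P : CoxPoly V S) : Set V := interior P.orbit

/-- The Cartan matrix `A_P = (α_s(v_t))`. -/
def CoxPoly.cartan (P : CoxPoly V S) : S → S → ℝ := fun s t => P.α s (P.v t)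

/-- The irreducible component of the index `s` for a matrix `A`. -/
def comp {T : Type*} (A : T → T → ℝ) (s : T) : Set T :=
  {t | Relation.ReflTransGen (fun a b => A a b ≠ 0) s t}

/-- The complex spectrum of a finite real matrix. -/
def specOf {T : Type*} [Finite T] (A : T → T → ℝ) : Set ℂ :=
  letI : Fintype T := Fintype.ofFinite T
  letI : DecidableEq T := Classical.decEq T
  spectrum ℂ (Matrix.of fun a b : T => (A a b : ℂ))

/-- The rank of a finite real matrix. -/
def rankOf {T : Type*} [Finite T] (A : T → T → ℝ) : ℕ :=
  letI : Fintype T := Fintype.ofFinite T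
  letI : DecidableEq T := Classical.decEq T
  (Matrix.of fun a b : T => A a b).rank

/-- The restriction of a matrix to a set of indices. -/
def restrict {T : Type*} (A : T → T → ℝ) (U : Set T) : ↥U → ↥U → ℝ :=
  fun a b => A a b

/-- The spectrum of the irreducible component of `s`. -/
def compSpec {T : Type*} [Finite T] (A : T → T → ℝ) (s : T) : Set ℂ :=
  specOf (restrict A (comp A s))

/-- The component of `s` is of positive type: its (Perron–Frobenius) eigenvalue of
minimal modulus is positive. -/
def PosTypeAt {T : Type*} [Finite T] (A : T → T → ℝ) (s : T) : Prop :=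
  ∃ lam : ℝ, 0 < lam ∧ (lam : ℂ) ∈ compSpec A s ∧
    ∀ μ ∈ compSpec A s, |lam| ≤ ‖μ‖

/-- The component of `s` is of zero type: its eigenvalue of minimal modulus is `0`. -/
def ZeroTypeAt {T : Type*} [Finite T] (A : T → T → ℝ) (s : T) : Prop :=
  (0 : ℂ) ∈ compSpec A s

/-- The component of `s` is of negative type: its (Perron–Frobenius) eigenvalue of
minimal modulus is negative. -/
def NegTypeAt {T : Type*} [Finite T] (A : T → T → ℝ) (s : T) : Prop :=
  ∃ lam : ℝ, lam < 0 ∧ (lam : ℂ) ∈ compSpec A s ∧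
    ∀ μ ∈ compSpec A s, |lam| ≤ ‖μ‖

/-- All irreducible components of `A` are of positive type. -/
def PositiveType {T : Type*} [Finite T] (A : T → T → ℝ) : Prop := ∀ s, PosTypeAt A s

/-- All irreducible components of `A` are of zero type. -/
def ZeroType {T : Type*} [Finite T] (A : T → T → ℝ) : Prop := ∀ s, ZeroTypeAt A s

/-- All irreducible components of `A` are of negative type. -/
def NegativeType {T : Type*} [Finite T] (A : T → T → ℝ) : Prop := ∀ s, NegTypeAt A s

/-- `P` is loxodromic: its Cartan matrix is of negative type and of full rank `d+1`. -/
def CoxPoly.Loxodromic (P : CoxPoly V S) : Prop :=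
  NegativeType P.cartan ∧ rankOf P.cartan = Module.finrank ℝ V

/-- `P` is elliptic: its Cartan matrix is of positive type. -/
def CoxPoly.Elliptic (P : CoxPoly V S) : Prop := PositiveType P.cartan

/-- `P` is parabolic: its Cartan matrix is of zero type and of rank `d`. -/
def CoxPoly.Parabolic (P : CoxPoly V S) : Prop :=
  ZeroType P.cartan ∧ rankOf P.cartan = Module.finrank ℝ V - 1

/-- The set of facets containing the point `p`. -/
def CoxPoly.facetsAt (P : CoxPoly V S) (p : V) : Set S := {s | P.α s p = 0}

/-- `p` spans a vertex of `P`: it is a nonzero point of the cone of `P` and the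
supports of the facets through `p` intersect exactly in the line through `p`. -/
def CoxPoly.IsVertex (P : CoxPoly V S) (p : V) : Prop :=
  p ∈ P.cone ∧ p ≠ 0 ∧ ∀ y : V, (∀ s ∈ P.facetsAt p, P.α s y = 0) → ∃ c : ℝ, y = c • p

/-- The Cartan matrix of the link of `P` at `p`: the principal submatrix of the
Cartan matrix on the facets through `p`. -/
def CoxPoly.linkCartan (P : CoxPoly V S) (p : V) : ↥(P.facetsAt p) → ↥(P.facetsAt p) → ℝ :=
  restrict P.cartan (P.facetsAt p)

/-- The vertex `p` is elliptic: the link `P_p` is elliptic. -/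
def CoxPoly.VertexElliptic (P : CoxPoly V S) (p : V) : Prop := PositiveType (P.linkCartan p)

/-- The vertex `p` is parabolic: the link `P_p` (a Coxeter polytope of `S^{d-1}`)
is parabolic. -/
def CoxPoly.VertexParabolic (P : CoxPoly V S) (p : V) : Prop :=
  ZeroType (P.linkCartan p) ∧ rankOf (P.linkCartan p) = Module.finrank ℝ V - 2

/-- The vertex `p` is loxodromic: the link `P_p` is loxodromic. -/
def CoxPoly.VertexLoxodromic (P : CoxPoly V S) (p : V) : Prop :=
  NegativeType (P.linkCartan p) ∧ rankOf (P.linkCartan p) = Module.finrank ℝ V - 1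

/-- `P` is `2`-perfect: `P ∩ ∂Ω_P` is contained in the set of vertices of `P`. -/
def CoxPoly.TwoPerfect (P : CoxPoly V S) : Prop :=
  ∀ x ∈ P.cone, x ∈ frontier P.domain → x ≠ 0 → P.IsVertex x

/-- The Coxeter group of `P` is irreducible: the Cartan matrix is irreducible. -/
def CoxPoly.CartanConnected (P : CoxPoly V S) : Prop :=
  ∀ s t : S, t ∈ comp P.cartan s

/-- `C` is (the cone over) a properly convex open subset of the projective sphere. -/
def IsPCCone (C : Set V) : Prop :=
  IsOpen C ∧ Convex ℝ C ∧ C.Nonempty ∧ (0 : V) ∉ C ∧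
    (∀ c : ℝ, 0 < c → ∀ x ∈ C, c • x ∈ C) ∧
    ∀ x : V, x ∈ closure C → -x ∈ closure C → x = 0

/-- The set `C` is invariant under `Γ_P`. -/
def CoxPoly.Invariant (P : CoxPoly V S) (C : Set V) : Prop :=
  ∀ γ ∈ P.group, ((γ : (Module.End ℝ V)ˣ) : Module.End ℝ V) '' C = C

/-- `L` is (the cone over) the limit set of `Γ_P`: the smallest nonempty closed
`Γ_P`-invariant subset of the projective space. -/
def CoxPoly.IsLimitSet (P : CoxPoly V S) (L : Set V) : Prop :=
  IsClosed L ∧ (0 : V) ∈ L ∧ L ≠ {0} ∧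
    (∀ c : ℝ, c ≠ 0 → ∀ x ∈ L, c • x ∈ L) ∧
    (∀ γ ∈ P.group, ((γ : (Module.End ℝ V)ˣ) : Module.End ℝ V) '' L ⊆ L) ∧
    ∀ L' : Set V, IsClosed L' → (0 : V) ∈ L' → L' ≠ {0} →
      (∀ c : ℝ, c ≠ 0 → ∀ x ∈ L', c • x ∈ L') →
      (∀ γ ∈ P.group, ((γ : (Module.End ℝ V)ˣ) : Module.End ℝ V) '' L' ⊆ L') → L ⊆ L'

/-- The action of `Γ_P` on `Ω_P` is cocompact ( `P` is perfect). -/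
def CoxPoly.Cocompact (P : CoxPoly V S) : Prop :=
  ∃ K : Set V, IsCompact K ∧ (0 : V) ∉ K ∧ K ⊆ P.domain ∧
    ∀ x ∈ P.domain, ∃ γ ∈ P.group, ∃ c : ℝ, 0 < c ∧
      c • (((γ : (Module.End ℝ V)ˣ) : Module.End ℝ V) x) ∈ K

/-- The Coxeter group of `P` is large: some finite-index subgroup surjects onto a
nonabelian free group. -/
def CoxPoly.Large (P : CoxPoly V S) : Prop :=
  ∃ H : Subgroup (Module.End ℝ V)ˣ, H ≤ P.group ∧ (H.subgroupOf P.group).index ≠ 0 ∧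
    ∃ φ : ↥H →* FreeGroup (Fin 2), Function.Surjective φ

/-- `Γ_P` is strongly irreducible: every finite-index subgroup acts irreducibly. -/
def CoxPoly.StronglyIrreducible (P : CoxPoly V S) : Prop :=
  ∀ H : Subgroup (Module.End ℝ V)ˣ, H ≤ P.group → (H.subgroupOf P.group).index ≠ 0 →
    ∀ W : Submodule ℝ V, (∀ γ ∈ H, ∀ x ∈ W, ((γ : (Module.End ℝ V)ˣ) : Module.End ℝ V) x ∈ W) →
      W = ⊥ ∨ W = ⊤

/-!
A Perron–Frobenius argument. Choose `c` with `N = c • 1 - A` entrywise nonnegative. On each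
irreducible component, a complex left eigenvector `z` of `A` for the negative eigenvalue `λ` is
one of `N` for `c - λ`, so by the triangle inequality `|z|` satisfies `(c - λ) |z| ≤ |z| N`, that
is `|z| A ≤ λ |z|`. Multiplying by `1 + N` preserves this and spreads positivity along the edges
of the component; summing the resulting vectors over all indices gives `μ > 0` with `μ A < 0`.
Then `f = ∑ μ_s α_s` is negative on the sharp cone over `P` minus `0`, and
`f (v_t) = (μ A)_t < 0`.
-/

open Matrix

theorem exists_vecMul_eq_smul_of_mem_spectrum {K m : Type*} [Field K] [Fintype m]
    [DecidableEq m] {M : Matrix m m K} {μ : K} (h : μ ∈ spectrum K M) :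
    ∃ z ≠ 0, z ᵥ* M = μ • z := by
  have hT : μ ∈ spectrum K (Mᵀ).toLin' := by
    rw [spectrum_toLin', spectrum.mem_iff, ← isUnit_transpose]
    simpa [transpose_sub, Algebra.algebraMap_eq_smul_one, spectrum.mem_iff] using h
  obtain ⟨z, hz⟩ := (Module.End.hasEigenvalue_iff_mem_spectrum.2 hT).exists_hasEigenvector
  exact ⟨z, hz.2, by simpa [toLin'_apply, mulVec_transpose] using hz.apply_eq_smul⟩

section Nonneg

variable {n : Type*} [Fintype n] {N : Matrix n n ℝ}

theorem vecMul_mono_of_nonneg (hN : ∀ i j, 0 ≤ N i j) {x y : n → ℝ} (hxy : x ≤ y) :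
    x ᵥ* N ≤ y ᵥ* N := fun j =>
  Finset.sum_le_sum fun i _ => mul_le_mul_of_nonneg_right (hxy i) (hN i j)

theorem vecMul_nonneg_of_nonneg (hN : ∀ i j, 0 ≤ N i j) {x : n → ℝ} (hx : 0 ≤ x) :
    0 ≤ x ᵥ* N := by
  simpa using vecMul_mono_of_nonneg hN hx

theorem norm_smul_le_vecMul_norm (hN : ∀ i j, 0 ≤ N i j) {ρ : ℂ} {z : n → ℂ}
    (hz : z ᵥ* N.map ((↑) : ℝ → ℂ) = ρ • z) :
    ‖ρ‖ • (fun i => ‖z i‖) ≤ (fun i => ‖z i‖) ᵥ* N := fun j => by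
  calc ‖ρ‖ * ‖z j‖ = ‖∑ i, z i * N i j‖ := by
        rw [← norm_mul, ← smul_eq_mul, ← Pi.smul_apply, ← hz]; rfl
    _ ≤ ∑ i, ‖z i‖ * N i j := by
        refine (norm_sum_le _ _).trans_eq (Finset.sum_congr rfl fun i _ => ?_)
        rw [norm_mul, Complex.norm_real, Real.norm_of_nonneg (hN i j)]

def IsSuperinvariant (N : Matrix n n ℝ) (ρ : ℝ) (x : n → ℝ) : Prop :=
  0 ≤ x ∧ ρ • x ≤ x ᵥ* N

theorem vecMul_one_add_eq [DecidableEq n] (x : n → ℝ) : x ᵥ* (1 + N) = x + x ᵥ* N := by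
  rw [vecMul_add, vecMul_one]

theorem IsSuperinvariant.vecMul_one_add [DecidableEq n] (hN : ∀ i j, 0 ≤ N i j) {ρ : ℝ}
    {x : n → ℝ} (hx : IsSuperinvariant N ρ x) : IsSuperinvariant N ρ (x ᵥ* (1 + N)) := by
  obtain ⟨hx0, hρx⟩ := hx
  have hρxN := vecMul_mono_of_nonneg hN hρx
  rw [smul_vecMul] at hρxN
  rw [IsSuperinvariant, vecMul_one_add_eq, add_vecMul, smul_add]
  exact ⟨add_nonneg hx0 (vecMul_nonneg_of_nonneg hN hx0), add_le_add hρx hρxN⟩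

theorem IsSuperinvariant.exists_pos_of_reflTransGen [DecidableEq n] (hN : ∀ i j, 0 ≤ N i j)
    {ρ : ℝ} {x : n → ℝ} (hx : IsSuperinvariant N ρ x) {a b : n} (ha : 0 < x a)
    (hab : Relation.ReflTransGen (fun i j => N i j ≠ 0) a b) :
    ∃ w, IsSuperinvariant N ρ w ∧ 0 < w b := by
  induction hab with
  | refl => exact ⟨x, hx, ha⟩
  | @tail b c _ hbc ih =>
    obtain ⟨w, hw, hwb⟩ := ih
    refine ⟨w ᵥ* (1 + N), hw.vecMul_one_add hN, ?_⟩
    have hwN : w b * N b c ≤ (w ᵥ* N) c :=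
      Finset.single_le_sum (f := fun i => w i * N i c)
        (fun i _ => mul_nonneg (hw.1 i) (hN i c)) (Finset.mem_univ b)
    have hwc : 0 ≤ w c := hw.1 c
    have hbc_pos := mul_pos hwb ((hN b c).lt_of_ne' hbc)
    rw [vecMul_one_add_eq, Pi.add_apply]
    linarith

theorem extend_zero_vecMul_apply {m : Type*} [Fintype m] {e : m → n}
    (he : Function.Injective e) (x : m → ℝ) (i : m) :
    (Function.extend e x 0 ᵥ* N) (e i) = (x ᵥ* N.submatrix e e) i := by
  simp only [vecMul, dotProduct, submatrix_apply]
  refine (Fintype.sum_of_injective e he _ _ (fun j hj => ?_) fun k => ?_).symm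
  · rw [Function.extend_apply' _ _ _ (by simpa using hj), Pi.zero_apply, zero_mul]
  · rw [he.extend_apply]

theorem IsSuperinvariant.extend_zero {m : Type*} [Fintype m] {e : m → n}
    (he : Function.Injective e) (hN : ∀ i j, 0 ≤ N i j) {ρ : ℝ} {x : m → ℝ}
    (hx : IsSuperinvariant (N.submatrix e e) ρ x) :
    IsSuperinvariant N ρ (Function.extend e x 0) := by
  have hx0 : 0 ≤ Function.extend e x 0 := Function.extend_nonneg hx.1 le_rfl
  refine ⟨hx0, fun j => ?_⟩
  by_cases hj : ∃ i, e i = j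
  · obtain ⟨i, rfl⟩ := hj
    simpa [he.extend_apply, extend_zero_vecMul_apply he] using hx.2 i
  · simpa [Function.extend_apply' _ _ _ hj] using vecMul_nonneg_of_nonneg hN hx0 j

end Nonneg

theorem reflTransGen_smul_one_sub_of_mem_comp {n : Type*} [DecidableEq n] {A : Matrix n n ℝ}
    {c : ℝ} (hzsym : ∀ i j, A i j = 0 → A j i = 0)
    {a b : n} (hab : b ∈ comp A a) :
    Relation.ReflTransGen (fun i j => (c • 1 - A) i j ≠ 0) b a := by
  have : Std.Symm fun i j => A i j ≠ 0 := ⟨fun i j hij hji => hij (hzsym j i hji)⟩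
  refine Relation.ReflTransGen.lift' id (fun i j hij => ?_) b a
    (Std.Symm.symm (r := Relation.ReflTransGen fun i j => A i j ≠ 0) _ _ hab)
  by_cases h : i = j
  · exact h ▸ Relation.ReflTransGen.refl
  · exact Relation.ReflTransGen.single (by simpa [one_apply_ne h] using hij)

theorem exists_pos_vecMul_neg_of_forall_vecMul_le_smul {n : Type*} [Fintype n]
    {A : Matrix n n ℝ}
    (h : ∀ a, ∃ w : n → ℝ, 0 ≤ w ∧ 0 < w a ∧ ∃ lam : ℝ, lam < 0 ∧ w ᵥ* A ≤ lam • w) :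
    ∃ μ : n → ℝ, (∀ i, 0 < μ i) ∧ ∀ j, (μ ᵥ* A) j < 0 := by
  choose w hw hwa lam hlam hwA using h
  have hwAj (a j : n) : (w a ᵥ* A) j ≤ lam a * w a j := hwA a j
  refine ⟨∑ a, w a, fun i => ?_, fun j => ?_⟩
  · rw [Finset.sum_apply]
    exact (hwa i).trans_le (Finset.single_le_sum (fun a _ => hw a i) (Finset.mem_univ i))
  · rw [sum_vecMul, Finset.sum_apply]
    calc ∑ a, (w a ᵥ* A) j < ∑ _a : n, (0 : ℝ) :=
          Finset.sum_lt_sum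
            (fun a _ => (hwAj a j).trans (mul_nonpos_of_nonpos_of_nonneg (hlam a).le (hw a j)))
            ⟨j, Finset.mem_univ j, (hwAj j j).trans_lt (mul_neg_of_neg_of_pos (hlam j) (hwa j))⟩
      _ = 0 := Finset.sum_const_zero

section ZMatrix

variable {n : Type*} [Fintype n] [DecidableEq n] {A : Matrix n n ℝ} {c : ℝ}

theorem exists_superinvariant_of_mem_compSpec (hN : ∀ i j, 0 ≤ (c • 1 - A) i j) {a : n}
    {lam : ℝ} (hlam : (lam : ℂ) ∈ compSpec A a) :
    ∃ y, IsSuperinvariant (c • 1 - A) (c - lam) y ∧ ∃ b ∈ comp A a, 0 < y b := by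
  let : Fintype (comp A a) := Fintype.ofFinite _
  let : DecidableEq (comp A a) := Classical.decEq _
  obtain ⟨z, hz0, hz⟩ := exists_vecMul_eq_smul_of_mem_spectrum hlam
  have hzN : z ᵥ* ((c • 1 - A).submatrix Subtype.val Subtype.val).map ((↑) : ℝ → ℂ) =
      ((c - lam : ℝ) : ℂ) • z := by
    have hM : ((c • 1 - A).submatrix Subtype.val Subtype.val).map ((↑) : ℝ → ℂ) =
        (c : ℂ) • 1 - Matrix.of fun i j : comp A a => (restrict A (comp A a) i j : ℂ) := by
      ext i j
      by_cases hij : i = j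
      · simp [restrict, hij]
      · simp [restrict, hij, one_apply_ne, Subtype.val_injective.ne hij]
    rw [hM, vecMul_sub, vecMul_smul, vecMul_one, hz, Complex.ofReal_sub, sub_smul]
  have hle : c - lam ≤ ‖((c - lam : ℝ) : ℂ)‖ := by
    simpa only [Complex.norm_real, Real.norm_eq_abs] using le_abs_self (c - lam)
  have hz_nonneg : 0 ≤ fun i => ‖z i‖ := fun i => norm_nonneg (z i)
  have hy : IsSuperinvariant ((c • 1 - A).submatrix Subtype.val Subtype.val) (c - lam)
      fun i => ‖z i‖ :=
    ⟨hz_nonneg, (smul_le_smul_of_nonneg_right hle hz_nonneg).trans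
      (norm_smul_le_vecMul_norm (fun i j : comp A a => hN i j) hzN)⟩
  obtain ⟨b, hb⟩ := Function.ne_iff.mp hz0
  refine ⟨_, hy.extend_zero Subtype.val_injective hN, b, b.2, ?_⟩
  rw [Subtype.val_injective.extend_apply]
  exact norm_pos_iff.mpr hb

theorem exists_vecMul_le_smul_of_negTypeAt (hN : ∀ i j, 0 ≤ (c • 1 - A) i j)
    (hzsym : ∀ i j, A i j = 0 → A j i = 0) {a : n} (ha : NegTypeAt A a) :
    ∃ w : n → ℝ, 0 ≤ w ∧ 0 < w a ∧ ∃ lam : ℝ, lam < 0 ∧ w ᵥ* A ≤ lam • w := by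
  obtain ⟨lam, hlam, hmem, -⟩ := ha
  obtain ⟨y, hy, b, hb, hyb⟩ := exists_superinvariant_of_mem_compSpec hN hmem
  obtain ⟨w, ⟨hw, hwN⟩, hwa⟩ :=
    hy.exists_pos_of_reflTransGen hN hyb (reflTransGen_smul_one_sub_of_mem_comp hzsym hb)
  refine ⟨w, hw, hwa, lam, hlam, fun j => ?_⟩
  have hwNj := hwN j
  simp only [vecMul_sub, vecMul_smul, vecMul_one, Pi.sub_apply, Pi.smul_apply,
    smul_eq_mul] at hwNj ⊢
  linarith

theorem exists_pos_vecMul_neg_of_negativeType (hoff : ∀ i j, i ≠ j → A i j ≤ 0)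
    (hzsym : ∀ i j, A i j = 0 → A j i = 0) (hneg : NegativeType A) :
    ∃ μ : n → ℝ, (∀ i, 0 < μ i) ∧ ∀ j, (μ ᵥ* A) j < 0 := by
  obtain ⟨c, hc⟩ := (Set.finite_range fun i => A i i).bddAbove
  have hN (i j : n) : 0 ≤ (c • 1 - A) i j := by
    by_cases hij : i = j
    · subst hij
      simpa using hc ⟨i, rfl⟩
    · simpa [one_apply_ne hij] using hoff i j hij
  exact exists_pos_vecMul_neg_of_forall_vecMul_le_smul fun a =>
    exists_vecMul_le_smul_of_negTypeAt hN hzsym (hneg a)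

end ZMatrix

theorem CoxPoly.sum_smul_α_neg_of_mem_cone (P : CoxPoly V S) {μ : S → ℝ}
    (hμ : ∀ s, 0 < μ s) {x : V} (hx : x ∈ P.cone) (hx0 : x ≠ 0) :
    (∑ s, μ s • P.α s) x < 0 := by
  have hterm : ∀ s ∈ Finset.univ, μ s * P.α s x ≤ 0 := fun s _ =>
    mul_nonpos_of_nonneg_of_nonpos (hμ s).le (hx s)
  simp only [LinearMap.sum_apply, LinearMap.smul_apply, smul_eq_mul]
  refine (Finset.sum_nonpos hterm).lt_of_ne fun hsum => hx0 (P.sharp x hx fun s => ?_)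
  have hs := (Finset.sum_eq_zero_iff_of_nonpos hterm).1 hsum s (Finset.mem_univ s)
  rw [map_neg, (mul_eq_zero.1 hs).resolve_left (hμ s).ne', neg_zero]

/-- **Affine chart containing `P` and its polars.** Let `P` be a Coxeter polytope of
`S^d` whose Cartan matrix is of negative type. Then there is an affine chart
(given by a linear form `f`, the chart being `{f < 0}`) of `S^d` containing `P` and all
the polars `[v_s]`, `s ∈ S`. -/
theorem negative_type_affine_chart (d : ℕ) (S : Type*) [Fintype S]
    (P : CoxPoly (EuclideanSpace ℝ (Fin (d + 1))) S)
    (hneg : NegativeType P.cartan) :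
    ∃ f : EuclideanSpace ℝ (Fin (d + 1)) →ₗ[ℝ] ℝ,
      (∀ x ∈ P.cone, x ≠ 0 → f x < 0) ∧ ∀ s : S, f (P.v s) < 0 := by
  classical
  obtain ⟨μ, hμ, hμA⟩ := exists_pos_vecMul_neg_of_negativeType P.offdiag P.zsym hneg
  refine ⟨∑ s, μ s • P.α s, fun x hx hx0 => P.sum_smul_α_neg_of_mem_cone hμ hx hx0,
    fun t => ?_⟩
  simpa [vecMul, dotProduct, CoxPoly.cartan] using hμA t

end Vinberg
end
end
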